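/- For every positive integer d, the number of filters of the poset (M_d^3, B_{3,d}) equals the sum of the first d+2 Catalan numbers, Σ_{i=0}^{d+1} C_i, where C_i = (2i)!/(i!(i+1)!). -/
import Mathlib


/-- The free abelian monoid `M` on variables `x₁, x₂, …`, identified with
finitely supported exponent vectors; index `i : ℕ` represents the variable `x_{i+1}`. -/
abbrev Mon : Type := ℕ →₀ ℕ

/-- Total degree of a monomial. -/
def deg (m : Mon) : ℕ := m.sum fun _ v => v

/-- `m` is a monomial in the first `n` variables, i.e. `m ∈ Mⁿ`. -/
def InVars (n : ℕ) (m : Mon) : Prop := ∀ i ∈ m.support, i < n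

/-- Elementary move: `m = (x_i / x_j) · m'` for some `i < j` with `x_j ∣ m'`. -/
def ElemMove (m m' : Mon) : Prop :=
  ∃ i j : ℕ, i < j ∧ m + Finsupp.single j 1 = m' + Finsupp.single i 1

/-- Stable move: `m = (x_i / x_s) · m'` where `s = maxsupp m'` and `i < s`. -/
def StableMove (m m' : Mon) : Prop :=
  ∃ s i : ℕ, i < s ∧ m' s ≠ 0 ∧ (∀ t, s < t → m' t = 0) ∧
    m + Finsupp.single s 1 = m' + Finsupp.single i 1

/-- The divisibility relation `D`: `(m, m') ∈ D` iff `m'` divides `m`. -/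
def Dvd' (m m' : Mon) : Prop := ∃ t : Mon, m = m' + t

/-- `M_d^3`: monomials in `x₁, x₂, x₃` of total degree `d`. -/
abbrev Md3 (d : ℕ) : Type := {m : Mon // InVars 3 m ∧ deg m = d}

/-- The total number of filters of `(M_d^3, B_{3,d})`, where `B_{3,d}` is the
reflexive–transitive closure of stable moves (which preserve both degree and
the variable range). -/
noncomputable def gTot (d : ℕ) : ℕ :=
  Nat.card {U : Set (Md3 d) //
    ∀ m ∈ U, ∀ m' : Md3 d, Relation.ReflTransGen StableMove m'.1 m.1 → m' ∈ U}

section AuxStmt19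
open Finset

/-- Decreasing sequences fitting under the staircase: `t j ≤ k - 1 - j`. -/
def stairF (k : ℕ) : Finset (Fin k → ℕ) :=
  (Fintype.piFinset fun j : Fin k => Finset.range (k - j)).filter
    fun t => ∀ i j : Fin k, i ≤ j → t j ≤ t i

def G (k : ℕ) : ℕ := (stairF k).card

lemma mem_stairF {k : ℕ} {t : Fin k → ℕ} :
    t ∈ stairF k ↔ (∀ j : Fin k, t j + j.1 < k) ∧ ∀ i j : Fin k, i ≤ j → t j ≤ t i := by
  simp only [stairF, mem_filter, Fintype.mem_piFinset, mem_range]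
  constructor
  · rintro ⟨h1, h2⟩
    exact ⟨fun j => by have := h1 j; have := j.isLt; omega, h2⟩
  · rintro ⟨h1, h2⟩
    exact ⟨fun j => by have := h1 j; omega, h2⟩

lemma G_zero : G 0 = 1 := by
  have : stairF 0 = {fun j : Fin 0 => j.elim0} := by
    apply Finset.eq_singleton_iff_unique_mem.mpr
    constructor
    · rw [mem_stairF]
      exact ⟨fun j => j.elim0, fun i => i.elim0⟩
    · intro t _
      funext j; exact j.elim0
  rw [G, this, Finset.card_singleton]

/-- The first index on the diagonal `t j + j = n`. -/
def fd (n : ℕ) (t : Fin (n+1) → ℕ) : Fin (n+1) :=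
  if h : (Finset.univ.filter fun j : Fin (n+1) => t j + j.1 = n).Nonempty then
    (Finset.univ.filter fun j : Fin (n+1) => t j + j.1 = n).min' h
  else 0

lemma fd_spec {n : ℕ} {t : Fin (n+1) → ℕ} (ht : t ∈ stairF (n+1)) :
    t (fd n t) + (fd n t).1 = n ∧ ∀ j : Fin (n+1), j < fd n t → t j + j.1 < n := by
  obtain ⟨hb, hd⟩ := mem_stairF.mp ht
  have hlast : (⟨n, by omega⟩ : Fin (n+1)) ∈
      Finset.univ.filter fun j : Fin (n+1) => t j + j.1 = n := by
    simp only [mem_filter, mem_univ, true_and]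
    have h := hb ⟨n, by omega⟩
    simp only [Fin.val_mk] at h ⊢
    omega
  have hne : (Finset.univ.filter fun j : Fin (n+1) => t j + j.1 = n).Nonempty := ⟨_, hlast⟩
  rw [fd, dif_pos hne]
  constructor
  · have := Finset.min'_mem _ hne
    simp only [mem_filter, mem_univ, true_and] at this
    exact this
  · intro j hj
    by_contra hc
    have hj' : t j + j.1 = n := by have := hb j; omega
    have hle : (Finset.univ.filter fun j : Fin (n+1) => t j + j.1 = n).min' hne ≤ j :=
      Finset.min'_le _ j (by rw [mem_filter]; exact ⟨mem_univ j, hj'⟩)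
    exact absurd hj (not_lt.mpr hle)

lemma fd_eq {n : ℕ} {t : Fin (n+1) → ℕ} (ht : t ∈ stairF (n+1)) {i : Fin (n+1)}
    (h1 : t i + i.1 = n) (h2 : ∀ j : Fin (n+1), j < i → t j + j.1 < n) : fd n t = i := by
  obtain ⟨ha, hmin⟩ := fd_spec ht
  rcases lt_trichotomy (fd n t) i with h | h | h
  · have := h2 _ h; omega
  · exact h
  · have := hmin _ h; omega

def glue (n : ℕ) (i : Fin (n+1)) (u : Fin i.1 → ℕ) (v : Fin (n - i.1) → ℕ) :
    Fin (n+1) → ℕ := fun j =>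
  if h : j.1 < i.1 then u ⟨j.1, h⟩ + (n - i.1)
  else if h2 : i.1 < j.1 then v ⟨j.1 - i.1 - 1, by have := j.isLt; omega⟩
  else n - i.1

lemma glue_lt {n : ℕ} {i : Fin (n+1)} {u : Fin i.1 → ℕ} {v : Fin (n - i.1) → ℕ}
    {j : Fin (n+1)} (h : j.1 < i.1) : glue n i u v j = u ⟨j.1, h⟩ + (n - i.1) := by
  simp only [glue, dif_pos h]

lemma glue_eq {n : ℕ} {i : Fin (n+1)} {u : Fin i.1 → ℕ} {v : Fin (n - i.1) → ℕ}
    {j : Fin (n+1)} (h : j.1 = i.1) : glue n i u v j = n - i.1 := by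
  simp only [glue]
  rw [dif_neg (by omega), dif_neg (by omega)]

lemma glue_gt {n : ℕ} {i : Fin (n+1)} {u : Fin i.1 → ℕ} {v : Fin (n - i.1) → ℕ}
    {j : Fin (n+1)} (h : i.1 < j.1) :
    glue n i u v j = v ⟨j.1 - i.1 - 1, by have := j.isLt; omega⟩ := by
  simp only [glue]
  rw [dif_neg (by omega), dif_pos h]

def splitU (n : ℕ) (i : Fin (n+1)) (t : Fin (n+1) → ℕ) : Fin i.1 → ℕ :=
  fun j => t ⟨j.1, by have := j.isLt; have := i.isLt; omega⟩ - (n - i.1)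

def splitV (n : ℕ) (i : Fin (n+1)) (t : Fin (n+1) → ℕ) : Fin (n - i.1) → ℕ :=
  fun l => t ⟨i.1 + 1 + l.1, by have := l.isLt; omega⟩

lemma fiber_card (n : ℕ) (i : Fin (n+1)) :
    ((stairF (n+1)).filter fun t => fd n t = i).card = G i.1 * G (n - i.1) := by
  rw [G, G, ← Finset.card_product]
  apply Finset.card_bij' (fun t _ => (splitU n i t, splitV n i t))
    (fun p _ => glue n i p.1 p.2)
  · -- forward membership
    intro t ht
    rw [mem_filter] at ht
    obtain ⟨hts, hfd⟩ := ht
    obtain ⟨hb, hdec⟩ := mem_stairF.mp hts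
    obtain ⟨hdiag, hmin⟩ := fd_spec hts
    rw [hfd] at hdiag hmin
    rw [Finset.mem_product]
    constructor
    · rw [mem_stairF]
      constructor
      · intro j
        have h1 : t ⟨j.1, by omega⟩ + j.1 < n := hmin ⟨j.1, by omega⟩ (by exact j.isLt)
        have h2 : t i ≤ t ⟨j.1, by omega⟩ := hdec ⟨j.1, by omega⟩ i (le_of_lt j.isLt)
        simp only [splitU]
        omega
      · intro a b hab
        simp only [splitU]
        have := hdec ⟨a.1, by omega⟩ ⟨b.1, by omega⟩ hab
        omega
    · rw [mem_stairF]
      constructor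
      · intro l
        have := hb ⟨i.1 + 1 + l.1, by have := l.isLt; omega⟩
        simp only [splitV]
        simp only [Fin.val_mk] at this ⊢
        omega
      · intro a b hab
        simp only [splitV]
        refine hdec _ _ ?_
        simp only [Fin.mk_le_mk]
        have : a.1 ≤ b.1 := hab
        omega
  · -- backward membership
    rintro ⟨u, v⟩ hp
    rw [Finset.mem_product] at hp
    obtain ⟨hu, hv⟩ := hp
    dsimp only at hu hv
    obtain ⟨hub, hudec⟩ := mem_stairF.mp hu
    obtain ⟨hvb, hvdec⟩ := mem_stairF.mp hv
    have hglue : glue n i u v ∈ stairF (n+1) := by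
      rw [mem_stairF]
      constructor
      · intro j
        rcases lt_trichotomy j.1 i.1 with h | h | h
        · rw [glue_lt h]
          have := hub ⟨j.1, h⟩
          simp only [Fin.val_mk] at this
          omega
        · rw [glue_eq h]
          have := j.isLt; omega
        · rw [glue_gt h]
          have := hvb ⟨j.1 - i.1 - 1, by have := j.isLt; omega⟩
          simp only [Fin.val_mk] at this
          have := j.isLt; omega
      · intro a b hab
        have hab' : a.1 ≤ b.1 := hab
        rcases lt_trichotomy a.1 i.1 with ha | ha | ha <;>
          rcases lt_trichotomy b.1 i.1 with hb' | hb' | hb'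
        · rw [glue_lt ha, glue_lt hb']
          have := hudec ⟨a.1, ha⟩ ⟨b.1, hb'⟩ (by simp only [Fin.mk_le_mk]; omega)
          omega
        · rw [glue_lt ha, glue_eq hb']; omega
        · rw [glue_lt ha, glue_gt hb']
          have := hvb ⟨b.1 - i.1 - 1, by have := b.isLt; omega⟩
          simp only [Fin.val_mk] at this
          omega
        · omega
        · rw [glue_eq ha, glue_eq hb']
        · rw [glue_eq ha, glue_gt hb']
          have := hvb ⟨b.1 - i.1 - 1, by have := b.isLt; omega⟩
          simp only [Fin.val_mk] at this
          omega
        · omega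
        · omega
        · rw [glue_gt ha, glue_gt hb']
          exact hvdec ⟨a.1 - i.1 - 1, by have := a.isLt; omega⟩
            ⟨b.1 - i.1 - 1, by have := b.isLt; omega⟩ (by simp only [Fin.mk_le_mk]; omega)
    rw [mem_filter]
    refine ⟨hglue, ?_⟩
    apply fd_eq hglue
    · rw [glue_eq rfl]
      have := i.isLt; omega
    · intro j hj
      have hj' : j.1 < i.1 := hj
      rw [glue_lt hj']
      have := hub ⟨j.1, hj'⟩
      simp only [Fin.val_mk] at this
      omega
  · -- left inverse : glue (split t) = t
    intro t ht
    rw [mem_filter] at ht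
    obtain ⟨hts, hfd⟩ := ht
    obtain ⟨hb, hdec⟩ := mem_stairF.mp hts
    obtain ⟨hdiag, hmin⟩ := fd_spec hts
    rw [hfd] at hdiag hmin
    funext j
    rcases lt_trichotomy j.1 i.1 with h | h | h
    · rw [glue_lt h]
      simp only [splitU, Fin.eta]
      have h2 : t i ≤ t j := hdec j i (by exact le_of_lt h)
      omega
    · rw [glue_eq h]
      have : j = i := Fin.ext h
      rw [this]
      omega
    · rw [glue_gt h]
      simp only [splitV]
      congr 1
      apply Fin.ext
      simp only [Fin.val_mk]
      omega
  · -- right inverse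
    rintro ⟨u, v⟩ hp
    simp only [Prod.mk.injEq]
    constructor
    · funext j
      simp only [splitU]
      rw [glue_lt (by exact j.isLt)]
      simp only [Fin.eta]
      omega
    · funext l
      simp only [splitV]
      rw [glue_gt (by simp only [Fin.val_mk]; omega)]
      congr 1
      apply Fin.ext
      simp only [Fin.val_mk]
      omega

lemma G_succ (n : ℕ) : G (n + 1) = ∑ i : Fin (n + 1), G i.1 * G (n - i.1) := by
  rw [G, Finset.card_eq_sum_card_fiberwise (f := fd n) (t := Finset.univ)
    (fun x _ => mem_univ _)]
  exact Finset.sum_congr rfl fun i _ => fiber_card n i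

lemma G_eq_catalan (k : ℕ) : G k = catalan k := by
  induction k using Nat.strong_induction_on with
  | _ k ih =>
    match k with
    | 0 => simpa [catalan_zero] using G_zero
    | n + 1 =>
      rw [G_succ, catalan_succ]
      refine Finset.sum_congr rfl fun i _ => ?_
      rw [ih i.1 (by have := i.isLt; omega), ih (n - i.1) (by have := i.isLt; omega)]

lemma catalan_factorial (i : ℕ) :
    (2 * i).factorial / (i.factorial * (i + 1).factorial) = catalan i := by
  have key : (2 * i).factorial = catalan i * (i.factorial * (i + 1).factorial) := by
    have h1 : (2 * i).choose i * i.factorial * i.factorial = (2 * i).factorial := by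
      have := Nat.choose_mul_factorial_mul_factorial (n := 2 * i) (k := i) (by omega)
      have h2i : 2 * i - i = i := by omega
      rwa [h2i] at this
    have h2 : (i + 1) * catalan i = (2 * i).choose i := by
      rw [succ_mul_catalan_eq_centralBinom, Nat.centralBinom]
    rw [← h1, ← h2, Nat.factorial_succ]
    ring
  rw [key]
  exact Nat.mul_div_cancel _ (Nat.mul_pos (Nat.factorial_pos i) (Nat.factorial_pos (i + 1)))

/-- Explicit monomial in three variables. -/
noncomputable def mk3 (a b c : ℕ) : Mon :=
  Finsupp.single 0 a + Finsupp.single 1 b + Finsupp.single 2 c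

@[simp] lemma mk3_apply_zero (a b c : ℕ) : mk3 a b c 0 = a := by
  simp [mk3, Finsupp.single_apply]

@[simp] lemma mk3_apply_one (a b c : ℕ) : mk3 a b c 1 = b := by
  simp [mk3, Finsupp.single_apply]

@[simp] lemma mk3_apply_two (a b c : ℕ) : mk3 a b c 2 = c := by
  simp [mk3, Finsupp.single_apply]

lemma mk3_apply_ge (a b c : ℕ) {t : ℕ} (h : 2 < t) : mk3 a b c t = 0 := by
  rw [mk3]
  simp only [Finsupp.add_apply, Finsupp.single_apply]
  rw [if_neg (by omega), if_neg (by omega), if_neg (by omega)]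
  rfl

lemma invars_mk3 (a b c : ℕ) : InVars 3 (mk3 a b c) := by
  intro i hi
  by_contra h
  rw [Finsupp.mem_support_iff] at hi
  exact hi (mk3_apply_ge a b c (by omega))

lemma deg_mk3 (a b c : ℕ) : deg (mk3 a b c) = a + b + c := by
  rw [mk3, deg]
  rw [Finsupp.sum_add_index (by simp) (by simp), Finsupp.sum_add_index (by simp) (by simp)]
  simp [Finsupp.sum_single_index]

lemma eq_mk3 {m : Mon} (h : InVars 3 m) : m = mk3 (m 0) (m 1) (m 2) := by
  ext i
  match i with
  | 0 => simp
  | 1 => simp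
  | 2 => simp
  | (n + 3) =>
    rw [mk3_apply_ge _ _ _ (by omega)]
    by_contra hc
    have := h (n + 3) (Finsupp.mem_support_iff.mpr hc)
    omega

lemma deg_eq {m : Mon} (h : InVars 3 m) : deg m = m 0 + m 1 + m 2 := by
  conv_lhs => rw [eq_mk3 h]
  exact deg_mk3 _ _ _

lemma mk3_add_single (a b c : ℕ) :
    mk3 a b c + Finsupp.single 0 1 = mk3 (a + 1) b c ∧
    mk3 a b c + Finsupp.single 1 1 = mk3 a (b + 1) c ∧
    mk3 a b c + Finsupp.single 2 1 = mk3 a b (c + 1) := by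
  refine ⟨?_, ?_, ?_⟩ <;>
  · ext t
    simp only [mk3, Finsupp.add_apply, Finsupp.single_apply]
    split_ifs <;> omega

lemma move_a (a b c : ℕ) : StableMove (mk3 (a + 1) b c) (mk3 a b (c + 1)) := by
  refine ⟨2, 0, by omega, by rw [mk3_apply_two]; omega, fun t ht => mk3_apply_ge _ _ _ ht, ?_⟩
  rw [(mk3_add_single (a + 1) b c).2.2, (mk3_add_single a b (c + 1)).1]

lemma move_b (a b c : ℕ) : StableMove (mk3 a (b + 1) c) (mk3 a b (c + 1)) := by
  refine ⟨2, 1, by omega, by rw [mk3_apply_two]; omega, fun t ht => mk3_apply_ge _ _ _ ht, ?_⟩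
  rw [(mk3_add_single a (b + 1) c).2.2, (mk3_add_single a b (c + 1)).2.1]

lemma move_s (a b : ℕ) : StableMove (mk3 (a + 1) b 0) (mk3 a (b + 1) 0) := by
  refine ⟨1, 0, by omega, by rw [mk3_apply_one]; omega, ?_, ?_⟩
  · intro t ht
    match t, ht with
    | 2, _ => rw [mk3_apply_two]
    | (n+3), _ => exact mk3_apply_ge _ _ _ (by omega)
  · rw [(mk3_add_single (a + 1) b 0).2.1, (mk3_add_single a (b + 1) 0).1]

lemma chainA (j : ℕ) : ∀ a b c : ℕ,
    Relation.ReflTransGen StableMove (mk3 (a + j) b c) (mk3 a b (c + j)) := by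
  induction j with
  | zero => intro a b c; exact Relation.ReflTransGen.refl
  | succ j ih =>
    intro a b c
    rw [show a + (j + 1) = a + 1 + j by omega, show c + (j + 1) = c + j + 1 by omega]
    exact (ih (a + 1) b c).tail (move_a a b (c + j))

lemma chainB (j : ℕ) : ∀ a b c : ℕ,
    Relation.ReflTransGen StableMove (mk3 a (b + j) c) (mk3 a b (c + j)) := by
  induction j with
  | zero => intro a b c; exact Relation.ReflTransGen.refl
  | succ j ih =>
    intro a b c
    rw [show b + (j + 1) = b + 1 + j by omega, show c + (j + 1) = c + j + 1 by omega]
    exact (ih a (b + 1) c).tail (move_b a b (c + j))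

lemma chainS (j : ℕ) : ∀ a b : ℕ,
    Relation.ReflTransGen StableMove (mk3 (a + j) b 0) (mk3 a (b + j) 0) := by
  induction j with
  | zero => intro a b; exact Relation.ReflTransGen.refl
  | succ j ih =>
    intro a b
    rw [show a + (j + 1) = a + 1 + j by omega, show b + (j + 1) = b + j + 1 by omega]
    exact (ih (a + 1) b).tail (move_s a (b + j))

lemma reach_of {a b c a' b' c' : ℕ} (hsum : a + b + c = a' + b' + c')
    (ha : a ≤ a') (hor : c' = 0 ∨ b ≤ b') :
    Relation.ReflTransGen StableMove (mk3 a' b' c') (mk3 a b c) := by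
  obtain ⟨k, rfl⟩ : ∃ k, a' = a + k := ⟨a' - a, by omega⟩
  rcases le_or_gt b b' with hb | hb
  · -- general case
    obtain ⟨l, rfl⟩ : ∃ l, b' = b + l := ⟨b' - b, by omega⟩
    obtain rfl : c = c' + k + l := by omega
    have h1 : Relation.ReflTransGen StableMove (mk3 (a + k) (b + l) c')
        (mk3 a (b + l) (c' + k)) := chainA k a (b + l) c'
    have h2 : Relation.ReflTransGen StableMove (mk3 a (b + l) (c' + k))
        (mk3 a b (c' + k + l)) := chainB l a b (c' + k)
    exact h1.trans h2
  · -- c' = 0, slide case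
    have hc' : c' = 0 := by rcases hor with h | h; exact h; omega
    subst hc'
    obtain rfl : b' = b + c - k := by omega
    have h1 : Relation.ReflTransGen StableMove (mk3 (a + k) (b + c - k) 0)
        (mk3 a (b + c - k + k) 0) := chainS k a (b + c - k)
    have h2 : Relation.ReflTransGen StableMove (mk3 a (b + c) 0) (mk3 a b (0 + c)) :=
      chainB c a b 0
    rw [show b + c - k + k = b + c by omega] at h1
    rw [show (0 : ℕ) + c = c by omega] at h2
    exact h1.trans h2

lemma deg_add (u v : Mon) : deg (u + v) = deg u + deg v := by
  rw [deg, deg, deg]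
  exact Finsupp.sum_add_index (by simp) (by simp)

lemma deg_single (i n : ℕ) : deg (Finsupp.single i n) = n := by
  rw [deg]
  exact Finsupp.sum_single_index rfl

/-- One stable move preserves the invariants and the filter predicate. -/
lemma step_back {m x z : Mon} (hmv : StableMove x z)
    (hz : InVars 3 z ∧ deg z = deg m ∧ m 0 ≤ z 0 ∧ (z 2 = 0 ∨ m 1 ≤ z 1)) :
    InVars 3 x ∧ deg x = deg m ∧ m 0 ≤ x 0 ∧ (x 2 = 0 ∨ m 1 ≤ x 1) := by
  obtain ⟨s, i, his, hs0, hmax, heq⟩ := hmv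
  obtain ⟨hzv, hzd, hz0, hz12⟩ := hz
  have hpt : ∀ t, x t + (if s = t then 1 else 0) = z t + (if i = t then 1 else 0) := by
    intro t
    have := congrArg (fun f : Mon => f t) heq
    simpa [Finsupp.add_apply, Finsupp.single_apply] using this
  have hs3 : s < 3 := hzv s (Finsupp.mem_support_iff.mpr hs0)
  have hxv : InVars 3 x := by
    intro t ht
    rw [Finsupp.mem_support_iff] at ht
    by_contra hc
    have h := hpt t
    have hzt : z t = 0 := hmax t (by omega)
    rw [if_neg (by omega), if_neg (by omega), hzt] at h
    omega
  have hxd : deg x = deg m := by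
    have : deg x + 1 = deg z + 1 := by
      have := congrArg deg heq
      rwa [deg_add, deg_add, deg_single, deg_single] at this
    omega
  refine ⟨hxv, hxd, ?_, ?_⟩
  · have h := hpt 0
    have hi : i < s := his
    by_cases h0 : i = 0
    · rw [if_neg (by omega), if_pos (by omega)] at h
      omega
    · rw [if_neg (by omega), if_neg (by omega)] at h
      omega
  · -- s = 1 or s = 2
    have hs1 : 1 ≤ s := by omega
    interval_cases s
    · -- s = 1, i = 0
      left
      have h := hpt 2
      have hz2 : z 2 = 0 := hmax 2 (by omega)
      rw [if_neg (by omega), if_neg (by omega), hz2] at h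
      omega
    · -- s = 2
      right
      have hz1 : m 1 ≤ z 1 := by
        rcases hz12 with h | h
        · exact absurd h hs0
        · exact h
      have h := hpt 1
      rw [if_neg (by omega)] at h
      split_ifs at h <;> omega

lemma reach_forward {m m' : Mon} (h : Relation.ReflTransGen StableMove m' m)
    (hm : InVars 3 m) :
    InVars 3 m' ∧ deg m' = deg m ∧ m 0 ≤ m' 0 ∧ (m' 2 = 0 ∨ m 1 ≤ m' 1) := by
  induction h using Relation.ReflTransGen.head_induction_on with
  | refl => exact ⟨hm, rfl, le_refl _, Or.inr (le_refl _)⟩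
  | head hstep _ ih => exact step_back hstep ih

/-- The triangle model of `M_d^3`. -/
abbrev Tri (d : ℕ) : Type := {p : ℕ × ℕ // p.1 + p.2 ≤ d}

/-- The stable order in the triangle model: `q` is reachable from `p`. -/
def TRel (d : ℕ) (q p : ℕ × ℕ) : Prop := p.1 ≤ q.1 ∧ (q.1 + q.2 = d ∨ p.2 ≤ q.2)

lemma reach_iff {d : ℕ} (x y : Md3 d) :
    Relation.ReflTransGen StableMove x.1 y.1 ↔
      TRel d (x.1 0, x.1 1) (y.1 0, y.1 1) := by
  obtain ⟨m', hx⟩ := x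
  obtain ⟨m, hy⟩ := y
  simp only [TRel]
  constructor
  · intro h
    obtain ⟨_, _, h0, h2⟩ := reach_forward h hy.1
    refine ⟨h0, ?_⟩
    rcases h2 with h2 | h2
    · left
      have := deg_eq hx.1
      rw [hx.2] at this
      omega
    · right; exact h2
  · rintro ⟨h0, h2⟩
    have hdm : m 0 + m 1 + m 2 = d := by
      have := deg_eq hy.1; rw [hy.2] at this; omega
    have hdm' : m' 0 + m' 1 + m' 2 = d := by
      have := deg_eq hx.1; rw [hx.2] at this; omega
    have key : Relation.ReflTransGen StableMove (mk3 (m' 0) (m' 1) (m' 2))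
        (mk3 (m 0) (m 1) (m 2)) := by
      apply reach_of (by omega) h0
      rcases h2 with h2 | h2
      · left; omega
      · right; exact h2
    rwa [← eq_mk3 hx.1, ← eq_mk3 hy.1] at key

/-- The equivalence between `M_d^3` and the triangle. -/
noncomputable def eTri (d : ℕ) : Md3 d ≃ Tri d where
  toFun x := ⟨(x.1 0, x.1 1), by
    have := deg_eq x.2.1; rw [x.2.2] at this; simp; omega⟩
  invFun p := ⟨mk3 p.1.1 p.1.2 (d - p.1.1 - p.1.2), invars_mk3 _ _ _, by
    rw [deg_mk3]; have := p.2; omega⟩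
  left_inv x := by
    apply Subtype.ext
    have h2 : x.1 2 = d - x.1 0 - x.1 1 := by
      have := deg_eq x.2.1; rw [x.2.2] at this; omega
    conv_rhs => rw [eq_mk3 x.2.1]
    rw [h2]
  right_inv p := by
    apply Subtype.ext
    simp [mk3_apply_zero, mk3_apply_one]
lemma eTri_fst {d : ℕ} (x : Md3 d) : ((eTri d) x).1 = (x.1 0, x.1 1) := rfl

lemma reach_iff' {d : ℕ} (x y : Md3 d) :
    Relation.ReflTransGen StableMove x.1 y.1 ↔ TRel d ((eTri d) x).1 ((eTri d) y).1 :=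
  reach_iff x y

/-- Transfer of filters to the triangle model. -/
noncomputable def filtEquiv (d : ℕ) :
    {U : Set (Md3 d) //
      ∀ m ∈ U, ∀ m' : Md3 d, Relation.ReflTransGen StableMove m'.1 m.1 → m' ∈ U} ≃
    {V : Set (Tri d) // ∀ p ∈ V, ∀ q : Tri d, TRel d q.1 p.1 → q ∈ V} where
  toFun U := ⟨(eTri d).symm ⁻¹' U.1, by
    intro p hp q hq
    simp only [Set.mem_preimage] at hp ⊢
    refine U.2 _ hp _ ?_
    rw [reach_iff']
    simpa using hq⟩
  invFun V := ⟨eTri d ⁻¹' V.1, by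
    intro m hm m' hm'
    simp only [Set.mem_preimage] at hm ⊢
    refine V.2 _ hm _ ?_
    rw [← reach_iff']
    exact hm'⟩
  left_inv U := by
    apply Subtype.ext
    ext m
    simp
  right_inv V := by
    apply Subtype.ext
    ext p
    simp

def StairS (k : ℕ) : Type :=
  {t : Fin k → ℕ // (∀ j : Fin k, t j + j.1 < k) ∧ ∀ i j : Fin k, i ≤ j → t j ≤ t i}

def extend (k : ℕ) (t : Fin k → ℕ) : ℕ → ℕ := fun j => if h : j < k then t ⟨j, h⟩ else 0

lemma extend_lt {k : ℕ} (t : Fin k → ℕ) {j : ℕ} (h : j < k) :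
    extend k t j = t ⟨j, h⟩ := dif_pos h

lemma extend_anti {k : ℕ} {t : Fin k → ℕ}
    (hdec : ∀ i j : Fin k, i ≤ j → t j ≤ t i) {i j : ℕ} (hij : i ≤ j) :
    extend k t j ≤ extend k t i := by
  unfold extend
  split_ifs with h1 h2 h2
  · exact hdec ⟨i, h2⟩ ⟨j, h1⟩ (by simp only [Fin.mk_le_mk]; omega)
  · omega
  · exact Nat.zero_le _
  · exact Nat.zero_le _

/-- The map from staircase data to filters of the triangle. -/
def psi (d : ℕ) : (Σ k : Fin (d + 2), StairS k.1) →
    {V : Set (Tri d) // ∀ p ∈ V, ∀ q : Tri d, TRel d q.1 p.1 → q ∈ V} :=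
  fun x => ⟨{q : Tri d | d + 1 - x.1.1 ≤ q.1.1 ∧
      extend x.1.1 x.2.1 (q.1.1 - (d + 1 - x.1.1)) ≤ q.1.2}, by
    obtain ⟨k, t, hb, hdec⟩ := x
    intro p hp q hq
    obtain ⟨hp1, hp2⟩ := hp
    obtain ⟨hq1, hq2⟩ := hq
    have hk : k.1 ≤ d + 1 := by have := k.isLt; omega
    constructor
    · simp only [Set.mem_setOf_eq] at *
      omega
    · simp only [Set.mem_setOf_eq] at *
      rcases hq2 with hq2 | hq2
      · -- q on the diagonal
        by_cases hr : q.1.1 - (d + 1 - k.1) < k.1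
        · rw [extend_lt _ hr]
          have := hb ⟨q.1.1 - (d + 1 - k.1), hr⟩
          simp only [Fin.val_mk] at this
          omega
        · unfold extend
          rw [dif_neg hr]
          exact Nat.zero_le _
      · calc extend k.1 t (q.1.1 - (d + 1 - k.1))
            ≤ extend k.1 t (p.1.1 - (d + 1 - k.1)) := extend_anti hdec (by omega)
          _ ≤ p.1.2 := hp2
          _ ≤ q.1.2 := hq2⟩

lemma mem_psi {d : ℕ} (x : Σ k : Fin (d + 2), StairS k.1) (q : Tri d) :
    q ∈ (psi d x).1 ↔ d + 1 - x.1.1 ≤ q.1.1 ∧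
      extend x.1.1 x.2.1 (q.1.1 - (d + 1 - x.1.1)) ≤ q.1.2 := Iff.rfl

lemma diag_mem_psi {d : ℕ} (x : Σ k : Fin (d + 2), StairS k.1) {a : ℕ} (ha : a ≤ d) :
    (⟨(a, d - a), by simp; omega⟩ : Tri d) ∈ (psi d x).1 ↔ d + 1 - x.1.1 ≤ a := by
  rw [mem_psi]
  dsimp only
  constructor
  · rintro ⟨h, _⟩; exact h
  · intro h
    refine ⟨h, ?_⟩
    obtain ⟨k, t, hb, hdec⟩ := x
    dsimp only
    by_cases hr : a - (d + 1 - k.1) < k.1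
    · rw [extend_lt _ hr]
      have := hb ⟨a - (d + 1 - k.1), hr⟩
      simp only [Fin.val_mk] at this
      have := k.isLt
      omega
    · unfold extend
      rw [dif_neg hr]
      exact Nat.zero_le _

lemma psi_injective (d : ℕ) : Function.Injective (psi d) := by
  rintro ⟨k, t, ht⟩ ⟨k', t', ht'⟩ h
  have hsets : (psi d ⟨k, t, ht⟩).1 = (psi d ⟨k', t', ht'⟩).1 := congrArg Subtype.val h
  have hk : k = k' := by
    apply Fin.ext
    by_contra hne
    have hkd : k.1 ≤ d + 1 := by have := k.isLt; omega
    have hkd' : k'.1 ≤ d + 1 := by have := k'.isLt; omega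
    rcases lt_trichotomy k.1 k'.1 with hlt | heq | hlt
    · -- d+1-k' < d+1-k, take a = d+1-k', diag in psi k' not in psi k
      have ha : d + 1 - k'.1 ≤ d := by omega
      have h1 := (diag_mem_psi ⟨k', t', ht'⟩ ha).mpr (le_refl _)
      rw [← hsets] at h1
      have h2 := (diag_mem_psi ⟨k, t, ht⟩ ha).mp h1
      dsimp only at h2
      omega
    · exact hne heq
    · have ha : d + 1 - k.1 ≤ d := by omega
      have h1 := (diag_mem_psi ⟨k, t, ht⟩ ha).mpr (le_refl _)
      rw [hsets] at h1
      have h2 := (diag_mem_psi ⟨k', t', ht'⟩ ha).mp h1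
      dsimp only at h2
      omega
  subst hk
  suffices ht'' : t = t' by
    subst ht''
    rfl
  funext j
  have hkd : k.1 ≤ d + 1 := by have := k.isLt; omega
  have key : ∀ (u u' : Fin k.1 → ℕ)
      (hu : (∀ l : Fin k.1, u l + l.1 < k.1) ∧ ∀ i l : Fin k.1, i ≤ l → u l ≤ u i)
      (hu' : (∀ l : Fin k.1, u' l + l.1 < k.1) ∧ ∀ i l : Fin k.1, i ≤ l → u' l ≤ u' i),
      (psi d ⟨k, u, hu⟩).1 = (psi d ⟨k, u', hu'⟩).1 → ∀ l : Fin k.1, u' l ≤ u l := by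
    intro u u' hu hu' hss l
    have hbound := hu.1 l
    have hq : ((d + 1 - k.1) + l.1) + u l ≤ d := by omega
    have hmem : (⟨((d + 1 - k.1) + l.1, u l), hq⟩ : Tri d) ∈ (psi d ⟨k, u, hu⟩).1 := by
      rw [mem_psi]
      dsimp only
      constructor
      · omega
      · have hr : (d + 1 - k.1) + l.1 - (d + 1 - k.1) = l.1 := by omega
        rw [hr, extend_lt _ l.isLt]
    rw [hss, mem_psi] at hmem
    dsimp only at hmem
    obtain ⟨_, h2⟩ := hmem
    have hr : (d + 1 - k.1) + l.1 - (d + 1 - k.1) = l.1 := by omega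
    rw [hr, extend_lt _ l.isLt] at h2
    simpa using h2
  exact le_antisymm (key t' t ht' ht hsets.symm j) (key t t' ht ht' hsets j)

lemma psi_surjective (d : ℕ) : Function.Surjective (psi d) := by
  rintro ⟨V, hV⟩
  by_cases hVe : V = ∅
  · refine ⟨⟨⟨0, by omega⟩, fun j => Fin.elim0 j, fun j => Fin.elim0 j,
      fun i => Fin.elim0 i⟩, ?_⟩
    apply Subtype.ext
    ext q
    rw [mem_psi]
    dsimp only
    simp only [hVe, Set.mem_empty_iff_false, iff_false]
    have := q.2
    rintro ⟨h1, _⟩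
    omega
  · obtain ⟨q0, hq0⟩ := Set.nonempty_iff_ne_empty.mpr hVe
    set A : Set ℕ := {a : ℕ | ∃ q : Tri d, q ∈ V ∧ q.1.1 = a} with hA
    have hAne : A.Nonempty := ⟨q0.1.1, q0, hq0, rfl⟩
    set s := sInf A with hs
    obtain ⟨q1, hq1V, hq1s⟩ : ∃ q : Tri d, q ∈ V ∧ q.1.1 = s := Nat.sInf_mem hAne
    have hsd : s ≤ d := by
      have := q1.2
      omega
    have hdiag : ∀ a, s ≤ a → a ≤ d → ∀ (hq : a + (d - a) ≤ d),
        (⟨(a, d - a), hq⟩ : Tri d) ∈ V := by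
      intro a h1 h2 hq
      refine hV q1 hq1V _ ⟨?_, Or.inl ?_⟩ <;> dsimp only <;> omega
    -- the thresholds
    set B : Fin (d + 1 - s) → Set ℕ :=
      fun j => {b : ℕ | ∃ q : Tri d, q ∈ V ∧ q.1 = (s + j.1, b)} with hB
    have hBne : ∀ j, (B j).Nonempty := by
      intro j
      have hj : s + j.1 ≤ d := by have := j.isLt; omega
      exact ⟨d - (s + j.1), ⟨(s + j.1, d - (s + j.1)), by omega⟩,
        hdiag (s + j.1) (by omega) hj (by omega), rfl⟩
    set t : Fin (d + 1 - s) → ℕ := fun j => sInf (B j) with htdef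
    have htmem : ∀ j, ∃ q : Tri d, q ∈ V ∧ q.1 = (s + j.1, t j) := fun j => Nat.sInf_mem (hBne j)
    have htle : ∀ j, t j ≤ d - (s + j.1) := by
      intro j
      have hj : s + j.1 ≤ d := by have := j.isLt; omega
      exact Nat.sInf_le ⟨⟨(s + j.1, d - (s + j.1)), by omega⟩,
        hdiag (s + j.1) (by omega) hj (by omega), rfl⟩
    have htb : ∀ j : Fin (d + 1 - s), t j + j.1 < d + 1 - s := by
      intro j
      have := htle j
      have := j.isLt
      omega
    have htdec : ∀ i j : Fin (d + 1 - s), i ≤ j → t j ≤ t i := by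
      intro i j hij
      have hij' : i.1 ≤ j.1 := hij
      by_cases hc : t i ≤ d - (s + j.1)
      · -- push (s+i, t i) to (s+j, t i)
        obtain ⟨qi, hqiV, hqi⟩ := htmem i
        have hj : s + j.1 ≤ d := by have := j.isLt; omega
        have hmem : (⟨(s + j.1, t i), by simp; omega⟩ : Tri d) ∈ V := by
          refine hV qi hqiV _ ⟨?_, Or.inr ?_⟩
          · rw [hqi]; simp; omega
          · rw [hqi]
        exact Nat.sInf_le ⟨_, hmem, rfl⟩
      · have := htle j
        omega
    refine ⟨⟨⟨d + 1 - s, by omega⟩, t, htb, htdec⟩, ?_⟩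
    apply Subtype.ext
    ext q
    rw [mem_psi]
    obtain ⟨⟨a, b⟩, hab⟩ := q
    simp only
    have hsimp : d + 1 - (d + 1 - s) = s := by omega
    rw [hsimp]
    constructor
    · rintro ⟨h1, h2⟩
      have har : a - s < d + 1 - s := by simp at hab; omega
      rw [extend_lt _ har] at h2
      obtain ⟨qa, hqaV, hqa⟩ := htmem ⟨a - s, har⟩
      refine hV qa hqaV _ ⟨?_, Or.inr ?_⟩
      · rw [hqa]; simp; omega
      · rw [hqa]
        simp only [Fin.val_mk] at h2 ⊢
        exact h2
    · intro hqV
      have h1 : s ≤ a := Nat.sInf_le ⟨_, hqV, rfl⟩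
      have har : a - s < d + 1 - s := by simp at hab; omega
      refine ⟨h1, ?_⟩
      rw [extend_lt _ har]
      refine Nat.sInf_le ⟨_, hqV, ?_⟩
      simp only [Fin.val_mk]
      congr 1
      omega

def stairSEquiv (k : ℕ) : StairS k ≃ {t : Fin k → ℕ // t ∈ stairF k} :=
  Equiv.subtypeEquivRight fun t => mem_stairF.symm

noncomputable instance (k : ℕ) : Fintype (StairS k) :=
  Fintype.ofEquiv _ (stairSEquiv k).symm

lemma card_stairS (k : ℕ) : Fintype.card (StairS k) = G k := by
  rw [Fintype.card_congr (stairSEquiv k), Fintype.card_coe]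
  rfl

lemma card_sigma_stairS (d : ℕ) :
    Nat.card (Σ k : Fin (d + 2), StairS k.1) = ∑ i ∈ Finset.range (d + 2), catalan i := by
  rw [Nat.card_eq_fintype_card, Fintype.card_sigma]
  rw [Fin.sum_univ_eq_sum_range (fun i => Fintype.card (StairS i))]
  exact Finset.sum_congr rfl fun i _ => by rw [card_stairS, G_eq_catalan]

end AuxStmt19

/-- For every positive integer `d`, the number of filters of
`(M_d^3, B_{3,d})` equals the sum of the first `d+2` Catalan numbers
`Σ_{i=0}^{d+1} C_i`, where `C_i = (2i)! / (i! · (i+1)!)`. -/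
theorem stmt19 (d : ℕ) (hd : 0 < d) :
    gTot d = ∑ i ∈ Finset.range (d + 2),
      (2 * i).factorial / (i.factorial * (i + 1).factorial) := by
  have h1 : gTot d = Nat.card {V : Set (Tri d) //
      ∀ p ∈ V, ∀ q : Tri d, TRel d q.1 p.1 → q ∈ V} := Nat.card_congr (filtEquiv d)
  have h2 : Nat.card {V : Set (Tri d) //
      ∀ p ∈ V, ∀ q : Tri d, TRel d q.1 p.1 → q ∈ V} =
      Nat.card (Σ k : Fin (d + 2), StairS k.1) :=
    (Nat.card_eq_of_bijective (psi d) ⟨psi_injective d, psi_surjective d⟩).symm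
  rw [h1, h2, card_sigma_stairS]
  exact Finset.sum_congr rfl fun i _ => (catalan_factorial i).symm
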